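/- arXiv:1803.03722 — 4 statements merged into one kernel-verified Lean document; each statement's English description precedes it below -/
import Mathlib

section
/- Let p > 1 be a real number, let d be a positive integer, and let λ be a partition with r ≤ d parts. Then |Aut(λ)| · ∏_{i=1}^{λ_1} p^{λ'_{i+1}(d - λ'_i)} · binom_p(d - λ'_{i+1}, λ'_i - λ'_{i+1}) = p^{|λ| d} · ∏_{j=0}^{r-1} (1 - p^{-d+j}), where binom_p denotes the p-binomial coefficient. -/
open Finset

noncomputable section

/-- A partition: a multiset of positive natural numbers. -/
def Ptn : Type := {s : Multiset ℕ // ∀ x ∈ s, 0 < x}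

namespace Ptn

/-- `|λ|`, the size of the partition. -/
def size (l : Ptn) : ℕ := l.1.sum
/-- `r(λ)`, the number of parts. -/
def numParts (l : Ptn) : ℕ := l.1.card
/-- `m_i(λ)`, the number of parts of size `i`. -/
def mult (l : Ptn) (i : ℕ) : ℕ := l.1.count i
/-- `λ'_i`, the number of parts of size at least `i` (the `i`-th column length). -/
def col (l : Ptn) (i : ℕ) : ℕ := (l.1.filter (fun x => i ≤ x)).card
/-- `λ_1`, the largest part. -/
def maxPart (l : Ptn) : ℕ := l.1.sup
/-- `∑_i (λ'_i)^2` (over `i ≥ 1`; the terms vanish for `i > |λ|`). -/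
def sumColSq (l : Ptn) : ℕ := ∑ i ∈ Finset.Icc 1 l.size, (l.col i) ^ 2
/-- `n(λ) = ∑_i C(λ'_i, 2)` (over `i ≥ 1`; the terms vanish for `i > |λ|`). -/
def nStat (l : Ptn) : ℕ := ∑ i ∈ Finset.Icc 1 l.size, Nat.choose (l.col i) 2

end Ptn

/-- `(x)_i = (1-x)(1-x/p)⋯(1-x/p^{i-1})`. -/
def poch (p x : ℝ) (i : ℕ) : ℝ := ∏ k ∈ Finset.range i, (1 - x / p ^ k)

/-- `|Aut(λ)| = p^{∑ (λ'_i)^2} ∏_i (1/p)_{m_i(λ)}`. -/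
def autCard (p : ℝ) (l : Ptn) : ℝ :=
  p ^ l.sumColSq * ∏ i ∈ Finset.Icc 1 l.size, poch p (1 / p) (l.mult i)

/-- The measure `P_{d,u}` on partitions. -/
def Pdu (p u : ℝ) (d : ℕ) (l : Ptn) : ℝ :=
  if l.numParts ≤ d then
    u ^ l.size / autCard p l
      * ∏ i ∈ Finset.Icc 1 d, (1 - u / p ^ i)
      * ∏ i ∈ Finset.Icc (d - l.numParts + 1) d, (1 - 1 / p ^ i)
  else 0

/-- `[n]_p = (p^n - 1)/(p - 1)`. -/
def qInt (p : ℝ) (n : ℕ) : ℝ := (p ^ n - 1) / (p - 1)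

/-- `[n]_p! = [n]_p [n-1]_p ⋯ [1]_p`. -/
def qFact (p : ℝ) (n : ℕ) : ℝ := ∏ k ∈ Finset.range n, qInt p (k + 1)

/-- The `p`-binomial coefficient `binom_p(n,j) = [n]_p! / ([j]_p! [n-j]_p!)`. -/
def qBinom (p : ℝ) (n j : ℕ) : ℝ := qFact p n / (qFact p j * qFact p (n - j))

/-! Write `g(n) = (1/p)_n = ∏_{k=1}^n (1 - p^{-k})`. Then
`binom_p(n, j) = p^{j(n-j)} g(n) / (g(j) g(n-j))` and, since `m_i = λ'_i - λ'_{i+1}`,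
`|Aut(λ)| = ∏_i p^{(λ'_i)^2} g(λ'_i - λ'_{i+1})`. Consequently the `i`-th factor
`p^{(λ'_i)^2} g(λ'_i - λ'_{i+1}) · p^{λ'_{i+1}(d-λ'_i)} binom_p(d - λ'_{i+1}, λ'_i - λ'_{i+1})`
equals `p^{λ'_i d} g(d - λ'_{i+1}) / g(d - λ'_i)`, so the product over `i` telescopes to
`p^{|λ| d} g(d) / g(d - r)`, and `g(d) / g(d - r) = ∏_{j<r} (1 - p^{-d+j})`. -/

theorem Multiset.count_eq_countP_le_sub_countP_lt (s : Multiset ℕ) (i : ℕ) :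
    s.count i = s.countP (i ≤ ·) - s.countP (i < ·) := by
  have h := Multiset.countP_eq_countP_filter_add s (i ≤ ·) (i = ·)
  have h₁ : s.countP (fun x => i ≤ x ∧ i = x) = s.count i :=
    Multiset.countP_congr rfl fun x _ => by simp only [eq_iff_iff]; omega
  have h₂ : s.countP (fun x => i ≤ x ∧ ¬i = x) = s.countP (i < ·) :=
    Multiset.countP_congr rfl fun x _ => by simp only [eq_iff_iff]; omega
  rw [Multiset.countP_filter, Multiset.countP_filter, h₁, h₂] at h
  omega

theorem Multiset.sum_Icc_card_filter_le_eq_sum {s : Multiset ℕ} {N : ℕ} (h : ∀ x ∈ s, x ≤ N) :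
    ∑ i ∈ Finset.Icc 1 N, (s.filter (i ≤ ·)).card = s.sum := by
  induction s using Multiset.induction_on with
  | empty => simp
  | cons a t ih =>
    have hIcc : {i ∈ Finset.Icc 1 N | i ≤ a} = Finset.Icc 1 a := by
      have := h a (Multiset.mem_cons_self a t)
      ext i; simp only [Finset.mem_filter, Finset.mem_Icc]; omega
    simp only [Multiset.filter_cons, Multiset.card_add, apply_ite Multiset.card,
      Multiset.card_singleton, Multiset.card_zero, sum_add_distrib, sum_boole, hIcc,
      Multiset.sum_cons, ih fun x hx => h x (Multiset.mem_cons_of_mem hx)]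
    simp

section QAnalogs

variable {p : ℝ}

theorem poch_succ (p x : ℝ) (n : ℕ) : poch p x (n + 1) = poch p x n * (1 - x / p ^ n) :=
  prod_range_succ _ _

theorem poch_one_div_pos (hp : 1 < p) (n : ℕ) : 0 < poch p (1 / p) n :=
  prod_pos fun k _ => sub_pos.mpr <| (div_lt_one (by positivity)).mpr <|
    ((div_lt_one (by positivity)).mpr hp).trans_le (one_le_pow₀ hp.le)

theorem sum_range_add_one_of_add (j m : ℕ) :
    ∑ k ∈ range (j + m), (k + 1) = ∑ k ∈ range j, (k + 1) + ∑ k ∈ range m, (k + 1) + j * m := by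
  induction m with
  | zero => simp
  | succ m ih => rw [← add_assoc, sum_range_succ, ih, sum_range_succ]; ring

theorem qFact_mul_pow (hp : 1 < p) (n : ℕ) :
    qFact p n * (p - 1) ^ n = p ^ (∑ k ∈ range n, (k + 1)) * poch p (1 / p) n := by
  induction n with
  | zero => simp [qFact, poch]
  | succ n ih =>
    have hp₀ : p ≠ 0 := by positivity
    have hp₁ : p - 1 ≠ 0 := sub_ne_zero.mpr hp.ne'
    have hq : qInt p (n + 1) * (p - 1) = p ^ (n + 1) * (1 - 1 / p / p ^ n) := by
      rw [qInt]; field_simp; ring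
    rw [qFact, prod_range_succ, ← qFact, poch_succ, sum_range_succ, pow_add, pow_succ]
    linear_combination (qInt p (n + 1) * (p - 1)) * ih +
      (p ^ (∑ k ∈ range n, (k + 1)) * poch p (1 / p) n) * hq

theorem qBinom_add_left (hp : 1 < p) (j m : ℕ) :
    qBinom p (j + m) j =
      p ^ (j * m) * poch p (1 / p) (j + m) / (poch p (1 / p) j * poch p (1 / p) m) := by
  have hp₁ : p - 1 ≠ 0 := sub_ne_zero.mpr hp.ne'
  have hq : ∀ n, qFact p n = p ^ (∑ k ∈ range n, (k + 1)) * poch p (1 / p) n / (p - 1) ^ n :=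
    fun n => eq_div_of_mul_eq (pow_ne_zero n hp₁) (qFact_mul_pow hp n)
  have := (poch_one_div_pos hp j).ne'
  have := (poch_one_div_pos hp m).ne'
  rw [qBinom, Nat.add_sub_cancel_left, hq, hq, hq, sum_range_add_one_of_add]
  field_simp
  ring

theorem poch_eq_poch_sub_mul_prod (hp : 1 < p) {r d : ℕ} (hr : r ≤ d) :
    poch p (1 / p) d = poch p (1 / p) (d - r) * ∏ j ∈ range r, (1 - p ^ (-(d : ℤ) + j)) := by
  induction r with
  | zero => simp
  | succ r ih =>
    have hp₀ : p ≠ 0 := by positivity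
    have hdr : d - r = d - (r + 1) + 1 := by omega
    have hpow : p ^ (-(d : ℤ) + r) = 1 / p / p ^ (d - (r + 1)) := by
      rw [show -(d : ℤ) + r = -((d - (r + 1) + 1 : ℕ) : ℤ) by omega, zpow_neg, zpow_natCast,
        pow_succ]
      field_simp
    rw [ih (by omega), hdr, poch_succ, prod_range_succ, hpow]
    ring

theorem qBinom_telescope_step (hp : 1 < p) {a b d : ℕ} (hba : b ≤ a) (had : a ≤ d) :
    p ^ (a ^ 2) * poch p (1 / p) (a - b) * (p ^ (b * (d - a)) * qBinom p (d - b) (a - b)) *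
      poch p (1 / p) (d - a) = p ^ (a * d) * poch p (1 / p) (d - b) := by
  obtain ⟨x, rfl⟩ := Nat.exists_eq_add_of_le hba
  obtain ⟨y, rfl⟩ := Nat.exists_eq_add_of_le had
  have := (poch_one_div_pos hp x).ne'
  have := (poch_one_div_pos hp y).ne'
  rw [show b + x - b = x by omega, show b + x + y - (b + x) = y by omega,
    show b + x + y - b = x + y by omega, qBinom_add_left hp]
  field_simp
  ring

theorem prod_Icc_qBinom_telescope (hp : 1 < p) {c : ℕ → ℕ} (hc : Antitone c) {d : ℕ}
    (hd : c 1 ≤ d) (n : ℕ) :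
    (∏ i ∈ Icc 1 n, p ^ (c i ^ 2) * poch p (1 / p) (c i - c (i + 1)) *
        (p ^ (c (i + 1) * (d - c i)) * qBinom p (d - c (i + 1)) (c i - c (i + 1)))) *
      poch p (1 / p) (d - c 1) =
      p ^ ((∑ i ∈ Icc 1 n, c i) * d) * poch p (1 / p) (d - c (n + 1)) := by
  induction n with
  | zero => simp
  | succ n ih =>
    have hn : 1 ≤ n + 1 := Nat.le_add_left 1 n
    rw [prod_Icc_succ_top hn, sum_Icc_succ_top hn, mul_right_comm, ih]
    linear_combination p ^ ((∑ i ∈ Icc 1 n, c i) * d) *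
      qBinom_telescope_step hp (hc (Nat.le_succ _)) ((hc hn).trans hd)

end QAnalogs

namespace Ptn

theorem antitone_col (l : Ptn) : Antitone l.col := fun _ _ hij =>
  Multiset.card_le_card (Multiset.monotone_filter_right l.1 fun _ => hij.trans)

theorem col_one (l : Ptn) : l.col 1 = l.numParts :=
  congrArg Multiset.card (Multiset.filter_eq_self.mpr l.2)

theorem col_eq_zero_of_maxPart_lt {l : Ptn} {i : ℕ} (h : l.maxPart < i) : l.col i = 0 :=
  Multiset.card_eq_zero.mpr <| Multiset.filter_eq_nil.mpr fun _ hx hix =>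
    (Multiset.le_sup hx).not_gt (h.trans_le hix)

theorem mult_eq_col_sub_col (l : Ptn) (i : ℕ) : l.mult i = l.col i - l.col (i + 1) := by
  simp only [mult, col, ← Multiset.countP_eq_card_filter, Nat.succ_le_iff]
  exact Multiset.count_eq_countP_le_sub_countP_lt l.1 i

theorem maxPart_le_size (l : Ptn) : l.maxPart ≤ l.size :=
  Multiset.sup_le.mpr fun _ hx => Multiset.le_sum_of_mem hx

theorem sum_col_eq_size (l : Ptn) : ∑ i ∈ Icc 1 l.maxPart, l.col i = l.size :=
  Multiset.sum_Icc_card_filter_le_eq_sum fun _ hx => Multiset.le_sup hx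

theorem prod_Icc_size_eq_prod_Icc_maxPart {M : Type*} [CommMonoid M] (l : Ptn) {f : ℕ → M}
    (hf : ∀ i, l.maxPart < i → f i = 1) :
    ∏ i ∈ Icc 1 l.size, f i = ∏ i ∈ Icc 1 l.maxPart, f i :=
  (prod_subset (Icc_subset_Icc_right l.maxPart_le_size) fun i hi hni => hf i <| by
    simp only [mem_Icc] at hi hni; omega).symm

end Ptn

theorem autCard_eq_prod (p : ℝ) (l : Ptn) :
    autCard p l = ∏ i ∈ Icc 1 l.maxPart,
      p ^ (l.col i ^ 2) * poch p (1 / p) (l.col i - l.col (i + 1)) := by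
  rw [autCard, Ptn.sumColSq, ← prod_pow_eq_pow_sum, ← prod_mul_distrib,
    l.prod_Icc_size_eq_prod_Icc_maxPart fun i hi => by
      simp [Ptn.mult_eq_col_sub_col, Ptn.col_eq_zero_of_maxPart_lt hi, poch]]
  simp only [Ptn.mult_eq_col_sub_col]

theorem aut_identity_general (p : ℝ) (hp : 1 < p) (d : ℕ)
    (l : Ptn) (hl : l.numParts ≤ d) :
    autCard p l *
      ∏ i ∈ Finset.Icc 1 l.maxPart,
        p ^ (l.col (i + 1) * (d - l.col i)) *
          qBinom p (d - l.col (i + 1)) (l.col i - l.col (i + 1))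
    = p ^ (l.size * d) *
        ∏ j ∈ Finset.range l.numParts, (1 - p ^ (-(d : ℤ) + (j : ℤ))) := by
  refine mul_right_cancel₀ (poch_one_div_pos hp (d - l.numParts)).ne' ?_
  have htelescope := prod_Icc_qBinom_telescope hp l.antitone_col (l.col_one ▸ hl) l.maxPart
  calc autCard p l * _ * poch p (1 / p) (d - l.numParts)
      = p ^ (l.size * d) * poch p (1 / p) d := by
        rw [autCard_eq_prod, ← prod_mul_distrib, ← l.col_one, htelescope, l.sum_col_eq_size,
          Ptn.col_eq_zero_of_maxPart_lt (Nat.lt_succ_self _), Nat.sub_zero]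
    _ = _ := by rw [poch_eq_poch_sub_mul_prod hp hl]; ring

/-- Equation (8) of the paper.
`|Aut(λ)| · ∏_{i=1}^{λ_1} p^{λ'_{i+1}(d-λ'_i)} binom_p(d-λ'_{i+1}, λ'_i-λ'_{i+1})
  = p^{|λ|d} ∏_{j=0}^{r-1} (1 - p^{-d+j})`. -/
theorem aut_identity (p : ℝ) (hp : 1 < p) (d : ℕ) (hd : 0 < d)
    (l : Ptn) (hl : l.numParts ≤ d) :
    autCard p l *
      ∏ i ∈ Finset.Icc 1 l.maxPart,
        p ^ (l.col (i + 1) * (d - l.col i)) *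
          qBinom p (d - l.col (i + 1)) (l.col i - l.col (i + 1))
    = p ^ (l.size * d) *
        ∏ j ∈ Finset.range l.numParts, (1 - p ^ (-(d : ℤ) + (j : ℤ))) :=
  aut_identity_general p hp d l hl
end
end

section
/- Let p > 1 be a real number and let n be a positive integer. For nonnegative integers a ≥ b define K_sym(a,b) = ∏_{i=1}^{a} (1 - 1/p^i) / (p^{C(b+1,2)} · ∏_{i=1}^{b} (1 - 1/p^i) · ∏_{j=1}^{⌊(a-b)/2⌋} (1 - 1/p^{2j})). Let λ be a partition with at most n parts, set λ'_0 = n, and let λ'_1 ≥ λ'_2 ≥ ⋯ be its column lengths (λ'_i = 0 for i > λ_1). Then K_sym(λ'_0, λ'_1) · K_sym(λ'_1, λ'_2) · ⋯ · K_sym(λ'_{λ_1}, λ'_{λ_1+1}) = P^Sym_n(λ). -/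
open Finset

noncomputable section

/-- The measure `P^{Sym}_n` on partitions (here `⌈(n-r)/2⌉` is `(n-r+1)/2` in
natural division). -/
def PSym (p : ℝ) (n : ℕ) (l : Ptn) : ℝ :=
  if l.numParts ≤ n then
    (∏ j ∈ Finset.Icc (n - l.numParts + 1) n, (1 - 1 / p ^ j)) *
      (∏ i ∈ Finset.Icc 1 ((n - l.numParts + 1) / 2), (1 - 1 / p ^ (2 * i - 1))) /
      (p ^ (l.nStat + l.size) *
        ∏ i ∈ Finset.Icc 1 l.size,
          ∏ j ∈ Finset.Icc 1 (l.mult i / 2), (1 - 1 / p ^ (2 * j)))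
  else 0

/-- The Markov transition kernel for the symmetric-matrix measure:
`K_sym(a,b) = ∏_{i=1}^a (1-1/p^i) / (p^{C(b+1,2)} ∏_{i=1}^b (1-1/p^i) ∏_{j=1}^{⌊(a-b)/2⌋} (1-1/p^{2j}))`. -/
def Ksym (p : ℝ) (a b : ℕ) : ℝ :=
  (∏ i ∈ Finset.Icc 1 a, (1 - 1 / p ^ i)) /
    (p ^ Nat.choose (b + 1) 2 * (∏ i ∈ Finset.Icc 1 b, (1 - 1 / p ^ i)) *
      ∏ j ∈ Finset.Icc 1 ((a - b) / 2), (1 - 1 / p ^ (2 * j)))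


section Aux

theorem even_odd_split (p : ℝ) (d : ℕ) :
    ∏ i ∈ Icc 1 d, (1 - 1/p^i) =
      (∏ j ∈ Icc 1 (d/2), (1 - 1/p^(2*j))) * ∏ j ∈ Icc 1 ((d+1)/2), (1 - 1/p^(2*j-1)) := by
  induction d with
  | zero => simp
  | succ d ih =>
    rw [Finset.prod_Icc_succ_top (by omega), ih]
    rcases Nat.even_or_odd (d+1) with ⟨k, hk⟩ | ⟨k, hk⟩
    · have hE : ∏ j ∈ Icc 1 ((d+1)/2), (1 - 1/p^(2*j))
          = (∏ j ∈ Icc 1 (d/2), (1 - 1/p^(2*j))) * (1 - 1/p^(d+1)) := by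
        have h1 : (d+1)/2 = d/2 + 1 := by omega
        rw [h1, Finset.prod_Icc_succ_top (by omega)]
        have h3 : 2 * (d/2+1) = d + 1 := by omega
        rw [h3]
      have hO : ∏ j ∈ Icc 1 ((d+2)/2), (1 - 1/p^(2*j-1))
          = ∏ j ∈ Icc 1 ((d+1)/2), (1 - 1/p^(2*j-1)) := by
        have h2 : (d+2)/2 = (d+1)/2 := by omega
        rw [h2]
      rw [hO, hE]; ring
    · have hE : ((d+1) : ℕ)/2 = d/2 := by omega
      have hO : ∏ j ∈ Icc 1 ((d+2)/2), (1 - 1/p^(2*j-1))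
          = (∏ j ∈ Icc 1 ((d+1)/2), (1 - 1/p^(2*j-1))) * (1 - 1/p^(d+1)) := by
        have h2 : (d+2)/2 = (d+1)/2 + 1 := by omega
        rw [h2, Finset.prod_Icc_succ_top (by omega)]
        have h3 : 2 * ((d+1)/2+1) - 1 = d + 1 := by omega
        rw [h3]
      rw [hO, hE]; ring

theorem card_filter_le_succ (s : Multiset ℕ) (i : ℕ) :
    (s.filter (fun x => i ≤ x)).card = (s.filter (fun x => i+1 ≤ x)).card + s.count i := by
  induction s using Multiset.induction_on with
  | empty => simp
  | cons a s ih =>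
    rw [Multiset.filter_cons, Multiset.filter_cons, Multiset.count_cons]
    simp only [Multiset.card_add, apply_ite Multiset.card, Multiset.card_singleton,
      Multiset.card_zero]
    split_ifs <;> omega

theorem sum_card_filter (s : Multiset ℕ) (N : ℕ) (hs : ∀ x ∈ s, x ≤ N) :
    ∑ i ∈ Icc 1 N, (s.filter (fun x => i ≤ x)).card = s.sum := by
  induction s using Multiset.induction_on with
  | empty => simp
  | cons a s ih =>
    have ha : a ≤ N := hs a (Multiset.mem_cons_self a s)
    have ih' := ih (fun x hx => hs x (Multiset.mem_cons_of_mem hx))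
    simp only [Multiset.filter_cons, Multiset.card_add, apply_ite Multiset.card,
      Multiset.card_singleton, Multiset.card_zero, Multiset.sum_cons]
    rw [Finset.sum_add_distrib, ih', Finset.sum_boole]
    have : (Icc 1 N).filter (fun i => i ≤ a) = Icc 1 a := by
      ext i; simp only [mem_filter, mem_Icc]; omega
    rw [this]
    simp [Nat.card_Icc]

theorem range_to_Icc (f : ℕ → ℝ) (n : ℕ) : ∏ i ∈ range n, f (i+1) = ∏ k ∈ Icc 1 n, f k := by
  rw [range_eq_Ico, ← Finset.Ico_add_one_right_eq_Icc]
  exact Finset.prod_Ico_add' f 0 n 1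

theorem range_to_Icc_nat (f : ℕ → ℕ) (n : ℕ) : ∑ i ∈ range n, f (i+1) = ∑ k ∈ Icc 1 n, f k := by
  rw [range_eq_Ico, ← Finset.Ico_add_one_right_eq_Icc]
  exact Finset.sum_Ico_add' f 0 n 1

variable (p : ℝ) (hp : 1 < p)

theorem hpos (hp : 1 < p) (i : ℕ) (hi : 1 ≤ i) : (0:ℝ) < 1 - 1/p^i := by
  have h1 : (1:ℝ) < p ^ i := one_lt_pow₀ hp (by omega)
  have : 1/p^i < 1 := by
    rw [div_lt_one (by linarith)]; exact h1
  linarith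

end Aux

/-- Theorem: Markov chain produces `P^{Sym}_n`.
With `λ'_0 = n`, the product `K_sym(λ'_0,λ'_1) K_sym(λ'_1,λ'_2) ⋯ K_sym(λ'_{λ_1}, λ'_{λ_1+1})`
equals `P^{Sym}_n(λ)`. -/
theorem markov_chain_gives_PSym (p : ℝ) (hp : 1 < p) (n : ℕ) (hn : 0 < n)
    (l : Ptn) (hl : l.numParts ≤ n) :
    ∏ i ∈ Finset.range (l.maxPart + 1),
      Ksym p (if i = 0 then n else l.col i) (l.col (i + 1)) = PSym p n l := by
  classical
  have hp0 : (0:ℝ) < p := lt_trans one_pos hp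
  set M := l.maxPart with hM
  have hposl : ∀ x ∈ l.1, 0 < x := l.2
  have hxM : ∀ x ∈ l.1, x ≤ M := fun x hx => Multiset.le_sup hx
  have hcol1 : l.col 1 = l.numParts := by
    show (l.1.filter (fun x => 1 ≤ x)).card = l.numParts
    have hf : l.1.filter (fun x => 1 ≤ x) = l.1 :=
      Multiset.filter_eq_self.2 (fun x hx => hposl x hx)
    rw [hf]
    rfl
  have hcolsup : ∀ i, M < i → l.col i = 0 := by
    intro i hi
    show (l.1.filter (fun x => i ≤ x)).card = 0
    rw [Multiset.filter_eq_nil.2 (fun x hx => by have := hxM x hx; omega)]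
    rfl
  have hMsize : M ≤ l.size :=
    Multiset.sup_le.2 (fun x hx => Multiset.single_le_sum (fun _ _ => Nat.zero_le _) x hx)
  have hmult : ∀ i, l.col i = l.col (i+1) + l.mult i := fun i => card_filter_le_succ l.1 i
  have hmult0 : ∀ i, M < i → l.mult i = 0 := by
    intro i hi
    exact Multiset.count_eq_zero.2 (fun hx => by have := hxM i hx; omega)
  have hsize : ∑ i ∈ Icc 1 l.size, l.col i = l.size :=
    sum_card_filter l.1 l.size
      (fun x hx => Multiset.single_le_sum (fun _ _ => Nat.zero_le _) x hx)
  -- the exponent sum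
  have hS : ∑ i ∈ range (M+1), Nat.choose (l.col (i+1) + 1) 2 = l.nStat + l.size := by
    rw [range_to_Icc_nat (fun k => Nat.choose (l.col k + 1) 2) (M+1)]
    rw [Finset.sum_subset (Finset.Icc_subset_Icc_right (by omega) :
        Icc 1 (M+1) ⊆ Icc 1 (l.size+1))
      (by
        intro k hk hk2
        simp only [mem_Icc] at hk hk2
        have : M < k := by omega
        rw [hcolsup k this]
        decide)]
    rw [Finset.sum_Icc_succ_top (by omega), hcolsup (l.size+1) (by omega)]
    have hch : ∀ m : ℕ, Nat.choose (m + 1) 2 = m + Nat.choose m 2 := by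
      intro m
      rw [Nat.choose_succ_succ, Nat.choose_one_right]
    simp only [hch]
    rw [Finset.sum_add_distrib, hsize]
    simp [Ptn.nStat]
    omega
  -- positivity
  have hNpos : ∀ a : ℕ, (0:ℝ) < ∏ k ∈ Icc 1 a, (1 - 1/p^k) :=
    fun a => Finset.prod_pos (fun k hk => hpos p hp k (mem_Icc.1 hk).1)
  have hEpos : ∀ m : ℕ, (0:ℝ) < ∏ j ∈ Icc 1 m, (1 - 1/p^(2*j)) :=
    fun m => Finset.prod_pos
      (fun j hj => hpos p hp (2*j) (by have := (mem_Icc.1 hj).1; omega))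
  -- main rewriting
  simp only [Ksym]
  rw [Finset.prod_div_distrib, Finset.prod_mul_distrib, Finset.prod_mul_distrib,
    Finset.prod_pow_eq_pow_sum, hS]
  have hnum : ∏ i ∈ range (M+1), (∏ k ∈ Icc 1 (if i = 0 then n else l.col i), (1 - 1/p^k))
      = (∏ i ∈ range M, ∏ k ∈ Icc 1 (l.col (i+1)), (1 - 1/p^k))
        * ∏ k ∈ Icc 1 n, (1 - 1/p^k) := by
    rw [Finset.prod_range_succ']
    simp
  have hden : ∏ i ∈ range (M+1), (∏ k ∈ Icc 1 (l.col (i+1)), (1 - 1/p^k))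
      = ∏ i ∈ range M, ∏ k ∈ Icc 1 (l.col (i+1)), (1 - 1/p^k) := by
    rw [Finset.prod_range_succ, hcolsup (M+1) (by omega)]
    simp
  have hEprod : ∏ i ∈ range (M+1),
        (∏ j ∈ Icc 1 (((if i = 0 then n else l.col i) - l.col (i+1))/2), (1 - 1/p^(2*j)))
      = (∏ i ∈ Icc 1 l.size, ∏ j ∈ Icc 1 ((l.mult i)/2), (1 - 1/p^(2*j)))
        * ∏ j ∈ Icc 1 ((n - l.numParts)/2), (1 - 1/p^(2*j)) := by
    rw [Finset.prod_range_succ']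
    congr 1
    · have hb : ∀ i ∈ range M,
          (∏ j ∈ Icc 1 (((if i+1 = 0 then n else l.col (i+1)) - l.col (i+1+1))/2),
            (1 - 1/p^(2*j)))
          = ∏ j ∈ Icc 1 ((l.mult (i+1))/2), (1 - 1/p^(2*j)) := by
        intro i _
        have h1 := hmult (i+1)
        have h2 : l.col (i+1) - l.col (i+1+1) = l.mult (i+1) := by omega
        rw [if_neg (Nat.succ_ne_zero i), h2]
      rw [Finset.prod_congr rfl hb,
        range_to_Icc (fun k => ∏ j ∈ Icc 1 ((l.mult k)/2), (1 - 1/p^(2*j))) M]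
      exact Finset.prod_subset (Finset.Icc_subset_Icc_right hMsize) (by
        intro k hk hk2
        simp only [mem_Icc] at hk hk2
        have hMk : M < k := by omega
        rw [hmult0 k hMk]
        simp)
    · norm_num [hcol1]
  rw [hnum, hden, hEprod]
  rw [PSym, if_pos hl]
  have hIoc : ∀ m : ℕ, Icc 1 m = Ioc 0 m := by
    intro m; ext x; simp only [mem_Icc, mem_Ioc]; omega
  have hIoc2 : Icc (n - l.numParts + 1) n = Ioc (n - l.numParts) n := by
    ext x; simp only [mem_Icc, mem_Ioc]; omega
  have hsplitN : (∏ k ∈ Icc 1 n, (1 - 1/p^k))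
      = (∏ k ∈ Icc 1 (n - l.numParts), (1 - 1/p^k))
        * ∏ k ∈ Icc (n - l.numParts + 1) n, (1 - 1/p^k) := by
    rw [hIoc n, hIoc (n - l.numParts), hIoc2]
    exact (Finset.prod_Ioc_consecutive _ (Nat.zero_le _) (Nat.sub_le n _)).symm
  rw [hsplitN, even_odd_split p (n - l.numParts)]
  have hApos : (0:ℝ) < ∏ i ∈ range M, ∏ k ∈ Icc 1 (l.col (i+1)), (1 - 1/p^k) :=
    Finset.prod_pos (fun i _ => hNpos (l.col (i+1)))
  have hBpos : (0:ℝ) < ∏ i ∈ Icc 1 l.size, ∏ j ∈ Icc 1 (l.mult i / 2), (1 - 1/p^(2*j)) :=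
    Finset.prod_pos (fun i _ => hEpos (l.mult i / 2))
  have hPpos : (0:ℝ) < p ^ (l.nStat + l.size) := pow_pos hp0 _
  have hEdpos : (0:ℝ) < ∏ j ∈ Icc 1 ((n - l.numParts)/2), (1 - 1/p^(2*j)) :=
    hEpos _
  rw [div_eq_div_iff (mul_pos (mul_pos hPpos hApos) (mul_pos hBpos hEdpos)).ne'
    (mul_pos hPpos hBpos).ne']
  ring
end
end

section
/- Let p > 1 be a real number, let n be a positive integer, and let r be an integer with 0 ≤ r ≤ n. Then the sum of P^Sym_n(λ) over all partitions λ with exactly r parts equals ∏_{j=r+1}^{n} (1 - 1/p^j) / (p^{C(r+1,2)} · ∏_{j=1}^{⌊(n-r)/2⌋} (1 - 1/p^{2j})). -/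
/-!
Write `q = 1/p`. On partitions with `r` parts, `P^Sym_n` is a constant depending only on `n` and
`r` times the weight `w(λ) = q^{n(λ)+|λ|} / ∏_i (q²;q²)_{⌊m_i/2⌋}`. Removing the first column
(of height `r`) is a bijection onto the partitions with at most `r` parts; it lowers `n(λ)+|λ|`
by `C(r+1,2)` and removes the factor `(q²;q²)_{⌊(r-s)/2⌋}` contributed by the parts equal to `1`,
where `s` is the number of remaining parts. Hence `W_r = ∑_{r(λ)=r} w(λ)` satisfies
`W_r = q^{C(r+1,2)} ∑_{s≤r} W_s / (q²;q²)_{⌊(r-s)/2⌋}`, and `W_r = q^{C(r+1,2)} / (q;q)_r` solves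
it because of the finite identity
`∑_{s≤r} q^{C(s+1,2)} / ((q;q)_s (q²;q²)_{⌊(r-s)/2⌋}) = 1/(q;q)_r`.
That identity is proved by induction on `r`: the terms `s - 1, s` with `r - s` even pair off.
Finally `(q;q)_m = (q;q²)_{⌈m/2⌉} (q²;q²)_{⌊m/2⌋}` turns the constant into the stated product.
-/

open Finset

noncomputable section

section qPochhammer

variable {R : Type*} [CommRing R] (q : R)

def qPoch (k : ℕ) : R := ∏ j ∈ Icc 1 k, (1 - q ^ j)

def qPochOdd (t : ℕ) : R := ∏ i ∈ Icc 1 t, (1 - q ^ (2 * i - 1))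

@[simp] lemma qPoch_zero : qPoch q 0 = 1 := by simp [qPoch]

lemma qPoch_succ (k : ℕ) : qPoch q (k + 1) = qPoch q k * (1 - q ^ (k + 1)) :=
  prod_Icc_succ_top (by omega) _

lemma qPochOdd_succ (t : ℕ) : qPochOdd q (t + 1) = qPochOdd q t * (1 - q ^ (2 * t + 1)) :=
  prod_Icc_succ_top (by omega) _

lemma qPoch_mul_prod_Icc {k n : ℕ} (h : k ≤ n) :
    qPoch q k * ∏ j ∈ Icc (k + 1) n, (1 - q ^ j) = qPoch q n := by
  simpa only [qPoch, ← Icc_add_one_left_eq_Ioc, zero_add] using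
    prod_Ioc_consecutive (fun j => 1 - q ^ j) (Nat.zero_le k) h

lemma qPoch_two_mul (t : ℕ) : qPoch q (2 * t) = qPochOdd q t * qPoch (q ^ 2) t := by
  induction t with
  | zero => simp [qPochOdd]
  | succ t ih =>
    rw [show 2 * (t + 1) = 2 * t + 1 + 1 by ring, qPoch_succ, qPoch_succ, ih, qPochOdd_succ,
      qPoch_succ]
    ring

lemma qPochOdd_mul_qPoch_sq (m : ℕ) :
    qPochOdd q ((m + 1) / 2) * qPoch (q ^ 2) (m / 2) = qPoch q m := by
  obtain ⟨t, rfl | rfl⟩ := Nat.even_or_odd' m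
  · rw [show (2 * t + 1) / 2 = t by omega, show 2 * t / 2 = t by omega, qPoch_two_mul]
  · rw [show (2 * t + 1 + 1) / 2 = t + 1 by omega, show (2 * t + 1) / 2 = t by omega,
      qPoch_succ, qPoch_two_mul, qPochOdd_succ]
    ring

end qPochhammer

lemma qPoch_ne_zero {K : Type*} [Field K] {q : K} (hq : ∀ j ≠ 0, q ^ j ≠ 1) (k : ℕ) :
    qPoch q k ≠ 0 :=
  prod_ne_zero_iff.mpr fun j hj => sub_ne_zero.mpr (hq j (by simp at hj; omega)).symm

lemma qPoch_sq_ne_zero {K : Type*} [Field K] {q : K} (hq : ∀ j ≠ 0, q ^ j ≠ 1) (k : ℕ) :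
    qPoch (q ^ 2) k ≠ 0 :=
  qPoch_ne_zero (fun j hj => by rw [← pow_mul]; exact hq _ (by omega)) k

lemma qPoch_pos {q : ℝ} (hq0 : 0 ≤ q) (hq1 : q < 1) (k : ℕ) : 0 < qPoch q k :=
  prod_pos fun j hj => sub_pos.mpr (pow_lt_one₀ hq0 hq1 (by simp at hj; omega))

lemma one_sub_pow_le_qPoch {q : ℝ} (hq0 : 0 ≤ q) (hq1 : q ≤ 1) (k : ℕ) :
    (1 - q) ^ k ≤ qPoch q k := by
  calc (1 - q) ^ k = ∏ _j ∈ Icc 1 k, (1 - q) := by simp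
    _ ≤ qPoch q k := prod_le_prod (fun _ _ => sub_nonneg.mpr hq1) fun j hj =>
      sub_le_sub_left (pow_le_of_le_one hq0 hq1 (by simp at hj; omega)) 1

lemma sum_range_ite_even_pow_mul {R : Type*} [CommSemiring R] (q : R) (g : ℕ → R) (m : ℕ)
    (h : ∀ k < m, Even k → q ^ k * g k = q ^ m * (g k + g (k + 1))) :
    ∑ k ∈ range (m + 1), (if Even k then q ^ k * g k else 0) =
      q ^ m * ∑ k ∈ range (m + 1), g k := by
  have pairs : ∀ t, 2 * t ≤ m + 1 → ∑ k ∈ range (2 * t), (if Even k then q ^ k * g k else 0) =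
      q ^ m * ∑ k ∈ range (2 * t), g k := by
    intro t
    induction t with
    | zero => simp
    | succ t ih =>
      intro ht
      rw [show 2 * (t + 1) = 2 * t + 1 + 1 by ring, sum_range_succ, sum_range_succ,
        sum_range_succ, sum_range_succ, ih (by omega), if_pos (even_two_mul t),
        if_neg (Nat.not_even_iff_odd.mpr (odd_two_mul_add_one t)), h _ (by omega) (even_two_mul t)]
      ring
  obtain ⟨t, rfl | rfl⟩ := Nat.even_or_odd' m
  · rw [sum_range_succ, sum_range_succ, pairs t (by omega), if_pos (even_two_mul t), mul_add]
  · exact pairs (t + 1) (by omega)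

section qIdentity

variable {K : Type*} [Field K] {q : K}

def symTerm (q : K) (r s : ℕ) : K :=
  q ^ (s + 1).choose 2 / (qPoch q s * qPoch (q ^ 2) ((r - s) / 2))

lemma symTerm_succ_left (hq : ∀ j ≠ 0, q ^ j ≠ 1) {r s : ℕ} (hs : s ≤ r) :
    symTerm q (r + 1) s - symTerm q r s =
      if Even (r + 1 - s) then q ^ (r + 1 - s) * symTerm q (r + 1) s else 0 := by
  split_ifs with h
  · obtain ⟨t, ht⟩ : ∃ t, r + 1 - s = 2 * (t + 1) := by
      obtain ⟨u, hu⟩ := h; exact ⟨u - 1, by omega⟩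
    have := qPoch_ne_zero hq s
    have hsucc := qPoch_sq_ne_zero hq (t + 1)
    rw [qPoch_succ] at hsucc
    have := left_ne_zero_of_mul hsucc
    have := right_ne_zero_of_mul hsucc
    rw [symTerm, symTerm, ht, show (r - s) / 2 = t by omega, show 2 * (t + 1) / 2 = t + 1 by omega,
      qPoch_succ]
    field_simp
    ring
  · rw [symTerm, symTerm, show (r + 1 - s) / 2 = (r - s) / 2 by grind, sub_self]

lemma symTerm_succ_right (hq : ∀ j ≠ 0, q ^ j ≠ 1) {r s : ℕ} (hs : s < r)
    (h : Even (r - (s + 1))) :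
    q ^ (s + 1) * symTerm q r s = (1 - q ^ (s + 1)) * symTerm q r (s + 1) := by
  have := qPoch_ne_zero hq s
  have := qPoch_sq_ne_zero hq ((r - s) / 2)
  have : 1 - q ^ (s + 1) ≠ 0 := sub_ne_zero.mpr (hq _ (by omega)).symm
  rw [symTerm, symTerm, show (r - (s + 1)) / 2 = (r - s) / 2 by grind, qPoch_succ,
    show (s + 1 + 1).choose 2 = (s + 1).choose 2 + (s + 1) by simp [Nat.choose_succ_succ']; ring]
  field_simp
  ring

theorem sum_symTerm (hq : ∀ j ≠ 0, q ^ j ≠ 1) (r : ℕ) :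
    ∑ s ∈ range (r + 1), symTerm q r s = (qPoch q r)⁻¹ := by
  induction r with
  | zero => simp [symTerm]
  | succ r ih =>
    let T := symTerm q (r + 1)
    have hdiff : ∑ s ∈ range (r + 2), T s - ∑ s ∈ range (r + 1), symTerm q r s =
        ∑ s ∈ range (r + 2), if Even (r + 1 - s) then q ^ (r + 1 - s) * T s else 0 := by
      rw [sum_range_succ T, sum_range_succ _ (r + 1), add_sub_right_comm, ← sum_sub_distrib,
        sum_congr rfl fun s hs => symTerm_succ_left hq (by simp at hs; omega)]
      simp [T]
    have hreflect : ∀ f : ℕ → K, ∑ s ∈ range (r + 2), f s = ∑ k ∈ range (r + 2), f (r + 1 - k) :=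
      fun f => (sum_range_reflect f (r + 2)).symm
    have hpair : ∑ s ∈ range (r + 2), (if Even (r + 1 - s) then q ^ (r + 1 - s) * T s else 0) =
        q ^ (r + 1) * ∑ s ∈ range (r + 2), T s := by
      rw [hreflect, hreflect T, ← sum_range_ite_even_pow_mul]
      · exact sum_congr rfl fun k hk => by rw [show r + 1 - (r + 1 - k) = k by simp at hk; omega]
      · intro k hk hev
        obtain ⟨s, rfl⟩ : ∃ s, r = k + s := ⟨r - k, by omega⟩
        have : q ^ (s + 1) * T s = (1 - q ^ (s + 1)) * T (s + 1) :=
          symTerm_succ_right hq (by omega) (by simpa using hev)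
        rw [show k + s + 1 - k = s + 1 by omega, show k + s + 1 - (k + 1) = s by omega]
        linear_combination -q ^ k * this
    have hS : (∑ s ∈ range (r + 2), T s) * (1 - q ^ (r + 1)) = (qPoch q r)⁻¹ := by
      rw [← ih]; linear_combination hdiff.trans hpair
    rw [qPoch_succ, mul_inv, ← hS, mul_inv_cancel_right₀ (sub_ne_zero.mpr (hq _ (by omega)).symm)]

end qIdentity

@[to_additive sum_Icc_one_succ]
lemma prod_Icc_one_succ {M : Type*} [CommMonoid M] (f : ℕ → M) (N : ℕ) :
    ∏ i ∈ Icc 1 (N + 1), f i = f 1 * ∏ i ∈ Icc 1 N, f (i + 1) := by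
  induction N with
  | zero => simp
  | succ N ih => rw [prod_Icc_succ_top (by omega), ih, prod_Icc_succ_top (by omega), mul_assoc]

lemma tsum_subtype_le_eq_sum_range {α E : Type*} [AddCommMonoid E] [TopologicalSpace E]
    [ContinuousAdd E] [T2Space E] (f : α → ℕ) (g : α → E) (r : ℕ)
    (hg : ∀ s, Summable fun a : {a // f a = s} => g a) :
    ∑' a : {a // f a ≤ r}, g a = ∑ s ∈ range (r + 1), ∑' a : {a // f a = s}, g a := by
  have hind : {a | f a ≤ r}.indicator g =
      fun a => ∑ s ∈ range (r + 1), {a | f a = s}.indicator g a := by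
    classical
    ext a
    simp only [Set.indicator_apply, Set.mem_ofPred_eq, sum_ite_eq, mem_range, Nat.lt_succ_iff]
  calc ∑' a : {a // f a ≤ r}, g a = ∑' a, {a | f a ≤ r}.indicator g a := tsum_subtype _ g
    _ = ∑ s ∈ range (r + 1), ∑' a, {a | f a = s}.indicator g a := by
      rw [hind]
      exact Summable.tsum_finsetSum fun s _ => summable_subtype_iff_indicator.mp (hg s)
    _ = _ := sum_congr rfl fun s _ => (tsum_subtype {a | f a = s} g).symm

namespace Ptn

variable {l μ : Ptn} {r : ℕ}

lemma le_size {x : ℕ} (hx : x ∈ l.1) : x ≤ l.size :=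
  Multiset.le_sum_of_mem hx

lemma col_eq_zero_of_size_lt {i : ℕ} (hi : l.size < i) : l.col i = 0 :=
  Multiset.card_eq_zero.mpr <| Multiset.filter_eq_nil.mpr fun _ hx hix =>
    absurd (le_size hx) (by omega)

lemma mult_eq_zero_of_size_lt {i : ℕ} (hi : l.size < i) : l.mult i = 0 :=
  Multiset.count_eq_zero.mpr fun hx => absurd (le_size hx) (by omega)

lemma nStat_eq_sum_Icc {N : ℕ} (hN : l.size ≤ N) :
    l.nStat = ∑ i ∈ Icc 1 N, (l.col i).choose 2 :=
  sum_subset (Icc_subset_Icc_right hN) fun i hi hi' => by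
    rw [col_eq_zero_of_size_lt (by simp at hi hi'; omega)]; rfl

lemma prod_mult_eq_prod_Icc {M : Type*} [CommMonoid M] (f : ℕ → M) (hf : f 0 = 1) {N : ℕ}
    (hN : l.size ≤ N) : ∏ i ∈ Icc 1 l.size, f (l.mult i) = ∏ i ∈ Icc 1 N, f (l.mult i) :=
  prod_subset (Icc_subset_Icc_right hN) fun i hi hi' => by
    rw [mult_eq_zero_of_size_lt (by simp at hi hi'; omega), hf]

lemma sum_mult_eq_numParts (l : Ptn) : ∑ i ∈ Icc 1 l.size, l.mult i = l.numParts :=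
  Multiset.sum_count_eq_card fun _ hx => mem_Icc.mpr ⟨l.2 _ hx, le_size hx⟩

def addColumn (r : ℕ) (μ : Ptn) : Ptn :=
  ⟨μ.1.map (· + 1) + Multiset.replicate (r - μ.numParts) 1, by
    simp only [Multiset.mem_add, Multiset.mem_map, Multiset.mem_replicate]
    rintro x (⟨a, -, rfl⟩ | ⟨-, rfl⟩) <;> omega⟩

lemma numParts_addColumn (h : μ.numParts ≤ r) : (μ.addColumn r).numParts = r := by
  simp only [addColumn, numParts, Multiset.card_add, Multiset.card_map,
    Multiset.card_replicate] at h ⊢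
  omega

lemma size_addColumn (h : μ.numParts ≤ r) : (μ.addColumn r).size = μ.size + r := by
  simp only [addColumn, size, numParts, Multiset.sum_add, Multiset.sum_map_add,
    Multiset.map_id', Multiset.map_const', Multiset.sum_replicate, smul_eq_mul] at h ⊢
  omega

lemma mult_addColumn_one : (μ.addColumn r).mult 1 = r - μ.numParts := by
  have : 0 ∉ μ.1 := fun h0 => (μ.2 0 h0).false
  simp [addColumn, mult, this]

lemma mult_addColumn_succ {i : ℕ} (hi : i ≠ 0) : (μ.addColumn r).mult (i + 1) = μ.mult i := by
  rw [mult, addColumn, Multiset.count_add, Multiset.count_map_eq_count' _ _ (add_left_injective 1),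
    Multiset.count_replicate, if_neg (by omega), add_zero]
  rfl

lemma col_addColumn_one (h : μ.numParts ≤ r) : (μ.addColumn r).col 1 = r := by
  have : (μ.addColumn r).1.filter (1 ≤ ·) = (μ.addColumn r).1 :=
    Multiset.filter_eq_self.mpr (μ.addColumn r).2
  rw [col, this]
  exact numParts_addColumn h

lemma col_addColumn_succ {i : ℕ} (hi : i ≠ 0) : (μ.addColumn r).col (i + 1) = μ.col i := by
  simp only [col, addColumn, Multiset.filter_add, Multiset.filter_map, Function.comp_apply,
    Order.add_one_le_iff, Order.lt_add_one_iff, Multiset.card_add, Multiset.card_map,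
    Nat.add_eq_left, Multiset.card_eq_zero, Multiset.filter_eq_nil, not_lt]
  intro a ha
  rw [Multiset.eq_of_mem_replicate ha]
  omega

lemma nStat_addColumn (h : μ.numParts ≤ r) :
    (μ.addColumn r).nStat = r.choose 2 + μ.nStat := by
  rw [nStat_eq_sum_Icc (N := μ.size + r + 1) (by rw [size_addColumn h]; omega), sum_Icc_one_succ,
    col_addColumn_one h, nStat_eq_sum_Icc (N := μ.size + r) (by omega)]
  congr 1
  exact sum_congr rfl fun i hi => by rw [col_addColumn_succ (by simp at hi; omega)]

def removeColumn (l : Ptn) : Ptn :=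
  ⟨(l.1.filter (2 ≤ ·)).map (· - 1), by
    simp only [Multiset.mem_map, Multiset.mem_filter]
    rintro x ⟨a, ⟨-, ha⟩, rfl⟩
    omega⟩

lemma removeColumn_addColumn (μ : Ptn) (r : ℕ) : (μ.addColumn r).removeColumn = μ := by
  apply Subtype.ext
  have hrep : (Multiset.replicate (r - μ.numParts) 1).filter (2 ≤ ·) = 0 :=
    Multiset.filter_eq_nil.mpr fun a ha => by rw [Multiset.eq_of_mem_replicate ha]; omega
  have hmap : (μ.1.map (· + 1)).filter (2 ≤ ·) = μ.1.map (· + 1) :=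
    Multiset.filter_eq_self.mpr fun a ha => by
      obtain ⟨b, hb, rfl⟩ := Multiset.mem_map.mp ha
      have := μ.2 b hb
      omega
  simp only [removeColumn, addColumn, Multiset.filter_add, hrep, hmap, add_zero, Multiset.map_map]
  exact (Multiset.map_congr rfl fun x _ => by simp).trans (Multiset.map_id _)

lemma numParts_removeColumn_le (l : Ptn) : l.removeColumn.numParts ≤ l.numParts :=
  (Multiset.card_map _ _).trans_le (Multiset.card_le_card (Multiset.filter_le _ _))

lemma addColumn_removeColumn (l : Ptn) : l.removeColumn.addColumn l.numParts = l := by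
  apply Subtype.ext
  have hsucc : ((l.1.filter (2 ≤ ·)).map (· - 1)).map (· + 1) = l.1.filter (2 ≤ ·) := by
    rw [Multiset.map_map]
    refine (Multiset.map_congr rfl fun x hx => ?_).trans (Multiset.map_id _)
    have := (Multiset.mem_filter.mp hx).2
    simp only [Function.comp_apply, id]
    omega
  have hones : l.1.filter (¬ 2 ≤ ·) =
      Multiset.replicate (l.numParts - l.removeColumn.numParts) 1 := by
    refine Multiset.eq_replicate.mpr ⟨?_, fun b hb => ?_⟩
    · have := congrArg Multiset.card (Multiset.filter_add_not (2 ≤ ·) l.1)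
      simp only [Multiset.card_add] at this
      simp only [numParts, removeColumn, Multiset.card_map]
      omega
    · have := l.2 b (Multiset.mem_filter.mp hb).1
      have := (Multiset.mem_filter.mp hb).2
      omega
  change ((l.1.filter (2 ≤ ·)).map (· - 1)).map (· + 1) + _ = l.1
  rw [hsucc, ← hones, Multiset.filter_add_not]

def addColumnEquiv (r : ℕ) : {μ : Ptn // μ.numParts ≤ r} ≃ {l : Ptn // l.numParts = r} where
  toFun μ := ⟨μ.1.addColumn r, numParts_addColumn μ.2⟩
  invFun l := ⟨l.1.removeColumn, (numParts_removeColumn_le l.1).trans_eq l.2⟩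
  left_inv μ := Subtype.ext (removeColumn_addColumn μ.1 r)
  right_inv := by
    rintro ⟨l, rfl⟩
    exact Subtype.ext (addColumn_removeColumn l)

section weight

variable {K : Type*} [Field K] (q : K)

def weight (l : Ptn) : K :=
  q ^ (l.nStat + l.size) / ∏ i ∈ Icc 1 l.size, qPoch (q ^ 2) (l.mult i / 2)

lemma weight_addColumn (h : μ.numParts ≤ r) :
    (μ.addColumn r).weight q =
      q ^ (r + 1).choose 2 * μ.weight q / qPoch (q ^ 2) ((r - μ.numParts) / 2) := by
  have hexp : (μ.addColumn r).nStat + (μ.addColumn r).size =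
      μ.nStat + μ.size + (r + 1).choose 2 := by
    rw [nStat_addColumn h, size_addColumn h, Nat.choose_succ_succ', Nat.choose_one_right]
    ring
  have hprod : ∏ i ∈ Icc 1 (μ.addColumn r).size, qPoch (q ^ 2) ((μ.addColumn r).mult i / 2) =
      qPoch (q ^ 2) ((r - μ.numParts) / 2) * ∏ i ∈ Icc 1 μ.size, qPoch (q ^ 2) (μ.mult i / 2) := by
    rw [prod_mult_eq_prod_Icc (fun m => qPoch (q ^ 2) (m / 2)) (by simp) (N := μ.size + r + 1)
        (by rw [size_addColumn h]; omega), prod_Icc_one_succ, mult_addColumn_one,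
      prod_mult_eq_prod_Icc (fun m => qPoch (q ^ 2) (m / 2)) (by simp) (N := μ.size + r) (by omega)]
    exact congrArg _ <| prod_congr rfl fun i hi => by
      rw [mult_addColumn_succ (by simp at hi; omega)]
  rw [weight, weight, hexp, hprod, pow_add]
  ring

end weight

instance : Unique {l : Ptn // l.numParts = 0} where
  default := ⟨⟨0, by simp⟩, rfl⟩
  uniq l := Subtype.ext <| Subtype.ext <| Multiset.card_eq_zero.mp l.2

lemma maxPart_mem (h : l.numParts ≠ 0) : l.maxPart ∈ l.1 := by
  obtain ⟨y, hy, hmax⟩ :=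
    Multiset.exists_max_image id (Multiset.card_pos.mp (Nat.pos_of_ne_zero h))
  rwa [maxPart, le_antisymm (Multiset.sup_le.mpr hmax) (Multiset.le_sup hy)]

def eraseMaxPart (l : Ptn) : Ptn :=
  ⟨l.1.erase l.maxPart, fun x hx => l.2 x (Multiset.mem_of_mem_erase hx)⟩

lemma numParts_eraseMaxPart (h : l.numParts ≠ 0) : l.eraseMaxPart.numParts = l.numParts - 1 :=
  Multiset.card_erase_of_mem (maxPart_mem h)

lemma maxPart_add_size_eraseMaxPart (h : l.numParts ≠ 0) :
    l.maxPart + l.eraseMaxPart.size = l.size :=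
  Multiset.sum_erase (maxPart_mem h)

section summation

variable {q : ℝ}

lemma summable_pow_size (hq0 : 0 ≤ q) (hq1 : q < 1) :
    ∀ s, Summable fun l : {l : Ptn // l.numParts = s} => q ^ l.1.size
  | 0 => (hasSum_unique _).summable
  | s + 1 => by
    -- splitting off the largest part is injective, so this reduces to a geometric series
    have hne (l : {l : Ptn // l.numParts = s + 1}) : l.1.numParts ≠ 0 := by rw [l.2]; omega
    let split (l : {l : Ptn // l.numParts = s + 1}) : ℕ × {l : Ptn // l.numParts = s} :=
      (l.1.maxPart, ⟨l.1.eraseMaxPart, by rw [numParts_eraseMaxPart (hne l), l.2]; rfl⟩)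
    have hsplit : Function.Injective split := by
      intro a b hab
      simp only [split, Prod.mk.injEq, Subtype.mk.injEq] at hab
      apply Subtype.ext; apply Subtype.ext
      rw [← Multiset.cons_erase (maxPart_mem (hne a)), ← Multiset.cons_erase (maxPart_mem (hne b))]
      exact congrArg₂ _ hab.1 (congrArg Subtype.val hab.2)
    have hprod := (summable_geometric_of_lt_one hq0 hq1).mul_of_nonneg
      (summable_pow_size hq0 hq1 s) (fun _ => pow_nonneg hq0 _) fun _ => pow_nonneg hq0 _
    refine (hprod.comp_injective hsplit).congr fun l => ?_
    simp only [Function.comp_apply, split, ← pow_add, maxPart_add_size_eraseMaxPart (hne l)]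

lemma weight_nonneg (hq0 : 0 ≤ q) (hq1 : q < 1) (l : Ptn) : 0 ≤ l.weight q :=
  div_nonneg (pow_nonneg hq0 _) <| prod_nonneg fun _ _ =>
    (qPoch_pos (sq_nonneg q) (by nlinarith) _).le

lemma weight_le (hq0 : 0 ≤ q) (hq1 : q < 1) (l : Ptn) :
    l.weight q ≤ q ^ l.size / (1 - q ^ 2) ^ l.numParts := by
  have h0 : 0 ≤ 1 - q ^ 2 := by nlinarith
  have hprod : (1 - q ^ 2) ^ l.numParts ≤ ∏ i ∈ Icc 1 l.size, qPoch (q ^ 2) (l.mult i / 2) := by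
    rw [← sum_mult_eq_numParts, ← prod_pow_eq_pow_sum]
    exact prod_le_prod (fun _ _ => pow_nonneg h0 _) fun i _ =>
      (pow_le_pow_of_le_one h0 (by nlinarith) (Nat.div_le_self _ 2)).trans
        (one_sub_pow_le_qPoch (sq_nonneg q) (by nlinarith) _)
  exact div_le_div₀ (pow_nonneg hq0 _) (pow_le_pow_of_le_one hq0 hq1.le (by omega))
    (pow_pos (by nlinarith) _) hprod

lemma summable_weight (hq0 : 0 ≤ q) (hq1 : q < 1) (s : ℕ) :
    Summable fun l : {l : Ptn // l.numParts = s} => l.1.weight q :=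
  ((summable_pow_size hq0 hq1 s).div_const ((1 - q ^ 2) ^ s)).of_nonneg_of_le
    (fun l => weight_nonneg hq0 hq1 l.1) fun l => l.2 ▸ weight_le hq0 hq1 l.1

def weightSum (q : ℝ) (r : ℕ) : ℝ := ∑' l : {l : Ptn // l.numParts = r}, l.1.weight q

lemma weightSum_zero : weightSum q 0 = 1 := by
  rw [weightSum, (hasSum_unique _).tsum_eq]
  simp [weight, nStat, size, default]

lemma weightSum_eq_sum (hq0 : 0 ≤ q) (hq1 : q < 1) (r : ℕ) :
    weightSum q r =
      q ^ (r + 1).choose 2 * ∑ s ∈ range (r + 1), weightSum q s / qPoch (q ^ 2) ((r - s) / 2) := by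
  calc weightSum q r = ∑' μ : {μ : Ptn // μ.numParts ≤ r}, (μ.1.addColumn r).weight q :=
        ((addColumnEquiv r).tsum_eq fun l => l.1.weight q).symm
    _ = q ^ (r + 1).choose 2 * ∑' μ : {μ : Ptn // μ.numParts ≤ r},
          μ.1.weight q / qPoch (q ^ 2) ((r - μ.1.numParts) / 2) := by
      rw [← tsum_mul_left]
      exact tsum_congr fun μ => by rw [weight_addColumn q μ.2, mul_div_assoc]
    _ = _ := by
      rw [tsum_subtype_le_eq_sum_range numParts
        (fun μ => μ.weight q / qPoch (q ^ 2) ((r - μ.numParts) / 2)) r fun s =>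
        ((summable_weight hq0 hq1 s).div_const _).congr fun μ => by rw [μ.2]]
      refine congrArg _ (sum_congr rfl fun s _ => ?_)
      rw [weightSum, ← tsum_div_const]
      exact tsum_congr fun μ => by rw [μ.2]

theorem weightSum_eq (hq0 : 0 ≤ q) (hq1 : q < 1) (r : ℕ) :
    weightSum q r = q ^ (r + 1).choose 2 / qPoch q r := by
  induction r using Nat.strong_induction_on with
  | _ r ih =>
  rcases Nat.eq_zero_or_pos r with rfl | hr
  · simp [weightSum_zero]
  have hq : ∀ j ≠ 0, q ^ j ≠ 1 := fun j hj => (pow_lt_one₀ hq0 hq1 hj).ne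
  have hlower : ∑ s ∈ range r, weightSum q s / qPoch (q ^ 2) ((r - s) / 2) =
      (qPoch q r)⁻¹ - q ^ (r + 1).choose 2 / qPoch q r := by
    rw [eq_sub_iff_add_eq, ← sum_symTerm hq r, sum_range_succ]
    congr 1
    · exact sum_congr rfl fun s hs => by rw [ih s (mem_range.mp hs), symTerm, div_div]
    · simp [symTerm]
  have hrec := weightSum_eq_sum hq0 hq1 r
  rw [sum_range_succ, hlower, Nat.sub_self, Nat.zero_div, qPoch_zero, div_one] at hrec
  have hC : q ^ (r + 1).choose 2 ≠ 1 := hq _ (Nat.choose_pos (by omega)).ne'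
  have key :
      (weightSum q r - q ^ (r + 1).choose 2 / qPoch q r) * (1 - q ^ (r + 1).choose 2) = 0 := by
    linear_combination hrec
  exact sub_eq_zero.mp ((mul_eq_zero.mp key).resolve_right (sub_ne_zero.mpr hC.symm))

end summation

end Ptn

theorem PSym_numParts_general (p : ℝ) (hp : 1 < p) (n : ℕ)
    (r : ℕ) (hr : r ≤ n) :
    ∑' l : {l : Ptn // l.numParts = r}, PSym p n l.1 =
      (∏ j ∈ Finset.Icc (r + 1) n, (1 - 1 / p ^ j)) /
        (p ^ Nat.choose (r + 1) 2 *
          ∏ j ∈ Finset.Icc 1 ((n - r) / 2), (1 - 1 / p ^ (2 * j))) := by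
  set q := p⁻¹
  have hq0 : 0 ≤ q := inv_nonneg.mpr (by linarith)
  have hq1 : q < 1 := inv_lt_one_of_one_lt₀ hp
  have hinv (j : ℕ) : 1 / p ^ j = q ^ j := by rw [one_div, inv_pow]
  have hpow (N : ℕ) : p ^ N = (q ^ N)⁻¹ := by rw [inv_pow, inv_inv]
  have hsq (t : ℕ) : ∏ j ∈ Icc 1 t, (1 - q ^ (2 * j)) = qPoch (q ^ 2) t := by simp [qPoch, pow_mul]
  have hPSym (l : {l : Ptn // l.numParts = r}) : PSym p n l.1 =
      (∏ j ∈ Icc (n - r + 1) n, (1 - q ^ j)) * qPochOdd q ((n - r + 1) / 2) * l.1.weight q := by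
    rw [PSym, if_pos (l.2.trans_le hr), l.2, Ptn.weight]
    simp only [hinv, hsq]
    rw [hpow, qPochOdd, div_eq_mul_inv, mul_inv, inv_inv]
    ring
  rw [tsum_congr hPSym, tsum_mul_left, ← Ptn.weightSum, Ptn.weightSum_eq hq0 hq1]
  simp only [hinv, hsq]
  rw [hpow]
  have hq : q ≠ 0 := inv_ne_zero (by linarith)
  have hDr := (qPoch_pos hq0 hq1 r).ne'
  have hE := (qPoch_pos (sq_nonneg q) (by nlinarith) ((n - r) / 2)).ne'
  calc (∏ j ∈ Icc (n - r + 1) n, (1 - q ^ j)) * qPochOdd q ((n - r + 1) / 2) *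
        (q ^ (r + 1).choose 2 / qPoch q r)
      = qPoch q (n - r) * (∏ j ∈ Icc (n - r + 1) n, (1 - q ^ j)) * q ^ (r + 1).choose 2 /
          (qPoch q r * qPoch (q ^ 2) ((n - r) / 2)) := by
        rw [← qPochOdd_mul_qPoch_sq q (n - r)]
        field_simp
    _ = qPoch q r * (∏ j ∈ Icc (r + 1) n, (1 - q ^ j)) * q ^ (r + 1).choose 2 /
          (qPoch q r * qPoch (q ^ 2) ((n - r) / 2)) := by
        rw [qPoch_mul_prod_Icc q (Nat.sub_le n r), qPoch_mul_prod_Icc q hr]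
    _ = _ := by field_simp

/-- Corollary: number of parts under `P^{Sym}_n`.
The probability that a partition drawn from `P^{Sym}_n` has exactly `r ≤ n` parts is
`∏_{j=r+1}^n (1-1/p^j) / (p^{C(r+1,2)} ∏_{j=1}^{⌊(n-r)/2⌋} (1-1/p^{2j}))`. -/
theorem PSym_numParts (p : ℝ) (hp : 1 < p) (n : ℕ) (hn : 0 < n)
    (r : ℕ) (hr : r ≤ n) :
    ∑' l : {l : Ptn // l.numParts = r}, PSym p n l.1 =
      (∏ j ∈ Finset.Icc (r + 1) n, (1 - 1 / p ^ j)) /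
        (p ^ Nat.choose (r + 1) 2 *
          ∏ j ∈ Finset.Icc 1 ((n - r) / 2), (1 - 1 / p ^ (2 * j))) :=
  PSym_numParts_general p hp n r hr
end
end

section
/- Let p be a prime and let d and n be positive integers. Then the number of subgroups Λ of ℤ^d of index p^n (equivalently, with ℤ^d/Λ a finite abelian p-group of order p^n) equals p^{n(d-1)} (1/p)_{d+n-1} / ((1/p)_{d-1} (1/p)_n). -/
/-!
Projecting a subgroup `Λ ≤ ℤ × H` of finite index `N` to the first factor gives `aℤ`, and its
fibre over `0` is `0 × K` with `a * [H : K] = N`; conversely `Λ` is determined by `a`, `K` and the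
class modulo `K` of any `h` with `(a, h) ∈ Λ`, and every class occurs. Hence the number `c_d(N)` of
subgroups of index `N` in `ℤ^d` satisfies `c_{d+1}(N) = ∑_{b ∣ N} b c_d(b)`, that is
`c_{d+1}(p^n) = ∑_{m ≤ n} p^m c_d(p^m)`. The closed form of the theorem is the Gaussian binomial
coefficient `[d - 1 + n choose n]_p`, which obeys the same recursion by the `q`-Pascal rule.
-/

open Finset

noncomputable section

section GaussianBinomial

variable {q : ℝ}

lemma poch_zero (x : ℝ) : poch q x 0 = 1 := prod_range_zero _

lemma poch_one_div_succ (hq : q ≠ 0) (k : ℕ) :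
    poch q (1 / q) (k + 1) = poch q (1 / q) k * ((q ^ (k + 1) - 1) / q ^ (k + 1)) := by
  rw [poch, prod_range_succ, ← poch]
  field_simp
  ring

lemma poch_one_div_pos_s19 (hq : 1 < q) (k : ℕ) : 0 < poch q (1 / q) k := by
  induction k with
  | zero => simp [poch_zero]
  | succ k ih =>
    rw [poch_one_div_succ (by positivity) k]
    have : 1 < q ^ (k + 1) := one_lt_pow₀ hq k.succ_ne_zero
    exact mul_pos ih (div_pos (by linarith) (by positivity))

/-- The Gaussian binomial coefficient `[e + n choose n]_q`, written with `(1/q)_i`. -/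
def gaussBinom (q : ℝ) (e n : ℕ) : ℝ :=
  q ^ (n * e) * poch q (1 / q) (e + n) / (poch q (1 / q) e * poch q (1 / q) n)

lemma gaussBinom_zero_left (hq : 1 < q) (n : ℕ) : gaussBinom q 0 n = 1 := by
  rw [gaussBinom, mul_zero, pow_zero, one_mul, zero_add, poch_zero, one_mul,
    div_self (poch_one_div_pos_s19 hq n).ne']

lemma gaussBinom_zero_right (hq : 1 < q) (e : ℕ) : gaussBinom q e 0 = 1 := by
  rw [gaussBinom, zero_mul, pow_zero, one_mul, add_zero, poch_zero, mul_one,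
    div_self (poch_one_div_pos_s19 hq e).ne']

lemma gaussBinom_succ_succ (hq : 1 < q) (e n : ℕ) :
    gaussBinom q (e + 1) (n + 1) =
      gaussBinom q (e + 1) n + q ^ (n + 1) * gaussBinom q e (n + 1) := by
  have hq0 : q ≠ 0 := by positivity
  have hsub (k : ℕ) : q ^ (k + 1) - 1 ≠ 0 := (sub_pos.2 (one_lt_pow₀ hq k.succ_ne_zero)).ne'
  simp only [gaussBinom, show e + 1 + (n + 1) = e + n + 1 + 1 by ring,
    show e + 1 + n = e + n + 1 by ring, show e + (n + 1) = e + n + 1 by ring,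
    poch_one_div_succ hq0 (e + n + 1), poch_one_div_succ hq0 e, poch_one_div_succ hq0 n]
  field_simp [hsub e, hsub n, hsub (e + n + 1)]
  ring

lemma gaussBinom_succ_left (hq : 1 < q) (e n : ℕ) :
    gaussBinom q (e + 1) n = ∑ m ∈ range (n + 1), q ^ m * gaussBinom q e m := by
  induction n with
  | zero => simp [gaussBinom_zero_right hq]
  | succ n ih => rw [gaussBinom_succ_succ hq, ih, sum_range_succ _ (n + 1)]

end GaussianBinomial

lemma Nat.div_ne_zero_of_mem_divisors {N b : ℕ} (hb : b ∈ N.divisors) : N / b ≠ 0 :=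
  (Nat.div_pos (Nat.divisor_le hb) (Nat.pos_of_mem_divisors hb)).ne'

lemma Int.addSubgroup_eq_zmultiples_index (K : AddSubgroup ℤ) :
    K = AddSubgroup.zmultiples (K.index : ℤ) := by
  obtain ⟨a, rfl⟩ := Int.subgroup_cyclic K
  rw [← AddSubgroup.zmultiples_eq_closure, Int.index_zmultiples, Int.zmultiples_natAbs]

namespace AddSubgroup

lemma index_eq_index_map_mul_relIndex_ker {G G' : Type*} [AddCommGroup G] [AddGroup G']
    {f : G →+ G'} (hf : Function.Surjective f) (Λ : AddSubgroup G) :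
    Λ.index = (Λ.map f).index * Λ.relIndex f.ker := by
  rw [← Λ.relIndex_mul_index (le_sup_left : Λ ≤ Λ ⊔ f.ker), relIndex_sup_left, index_map,
    f.range_eq_top_of_surjective hf, index_top, mul_one, mul_comm]

lemma index_eq_index_map_fst_mul_index_comap_inr {G H : Type*} [AddCommGroup G]
    [AddCommGroup H] (Λ : AddSubgroup (G × H)) :
    Λ.index = (Λ.map (AddMonoidHom.fst G H)).index * (Λ.comap (AddMonoidHom.inr G H)).index := by
  rw [Λ.index_eq_index_map_mul_relIndex_ker (f := AddMonoidHom.fst G H) Prod.fst_surjective,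
    index_comap]
  congr 2
  ext x
  simp [mem_prod, Prod.ext_iff, eq_comm]

open QuotientAddGroup

variable {H : Type*} [AddCommGroup H]

def prodSublattice (a : ℕ) (K : AddSubgroup H) (c : H ⧸ K) : AddSubgroup (ℤ × H) :=
  (zmultiples ((a : ℤ), c)).comap ((AddMonoidHom.id ℤ).prodMap (mk' K))

section prodSublattice

variable {a : ℕ} {K : AddSubgroup H} {c : H ⧸ K}

lemma mem_prodSublattice {x : ℤ × H} :
    x ∈ prodSublattice a K c ↔ ∃ m : ℤ, m * a = x.1 ∧ m • c = (x.2 : H ⧸ K) := by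
  simp [prodSublattice, mem_zmultiples_iff, Prod.ext_iff]

lemma map_fst_prodSublattice :
    (prodSublattice a K c).map (AddMonoidHom.fst ℤ H) = zmultiples (a : ℤ) := by
  ext x
  simp only [mem_map, mem_prodSublattice, mem_zmultiples_iff]
  constructor
  · rintro ⟨y, ⟨m, hm, -⟩, rfl⟩
    exact ⟨m, by simpa using hm⟩
  · rintro ⟨m, rfl⟩
    obtain ⟨h, hh⟩ := mk_surjective (m • c)
    exact ⟨(m * a, h), ⟨m, rfl, hh.symm⟩, by simp⟩

lemma comap_inr_prodSublattice (ha : a ≠ 0) :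
    (prodSublattice a K c).comap (AddMonoidHom.inr ℤ H) = K := by
  ext h
  simp [mem_prodSublattice, ha, eq_comm (a := (0 : H ⧸ K))]

lemma index_prodSublattice (ha : a ≠ 0) : (prodSublattice a K c).index = a * K.index := by
  rw [index_eq_index_map_fst_mul_index_comap_inr, map_fst_prodSublattice,
    comap_inr_prodSublattice ha, Int.index_zmultiples, Int.natAbs_natCast]

lemma prodSublattice_injective (ha : a ≠ 0) : Function.Injective (prodSublattice a K) := by
  intro c c' hcc'
  obtain ⟨h, rfl⟩ := mk_surjective c
  have : ((a : ℤ), h) ∈ prodSublattice a K c' :=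
    hcc' ▸ mem_prodSublattice.2 ⟨1, by simp, by simp⟩
  obtain ⟨m, hm, hmc⟩ := mem_prodSublattice.1 this
  obtain rfl : m = 1 := by simpa [ha] using hm
  simpa using hmc.symm

lemma eq_prodSublattice {Λ : AddSubgroup (ℤ × H)} {h : H}
    (hfst : Λ.map (AddMonoidHom.fst ℤ H) = zmultiples (a : ℤ)) (hh : ((a : ℤ), h) ∈ Λ) :
    Λ = prodSublattice a (Λ.comap (AddMonoidHom.inr ℤ H)) h := by
  have mem_iff (x : ℤ × H) (m : ℤ) (hm : m * a = x.1) :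
      x ∈ Λ ↔ x.2 - m • h ∈ Λ.comap (AddMonoidHom.inr ℤ H) := by
    have : (0, x.2 - m • h) = x - m • ((a : ℤ), h) := by ext <;> simp [hm]
    rw [mem_comap, AddMonoidHom.inr_apply, this, sub_eq_add_neg,
      add_mem_cancel_right (neg_mem (zsmul_mem hh m))]
  ext x
  rw [mem_prodSublattice]
  constructor
  · intro hx
    obtain ⟨m, hm⟩ := mem_zmultiples_iff.1 (hfst ▸ mem_map_of_mem _ hx)
    have hm : m * a = x.1 := by simpa using hm
    refine ⟨m, hm, ?_⟩
    rw [← mk_zsmul, eq_comm, eq_iff_sub_mem, ← mem_iff x m hm]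
    exact hx
  · rintro ⟨m, hm, hmc⟩
    rw [mem_iff x m hm, ← eq_iff_sub_mem, mk_zsmul]
    exact hmc.symm

end prodSublattice

variable (H) in
def sublatticeOfSigma (N : ℕ)
    (x : Σ b : N.divisors, Σ K : {K : AddSubgroup H // K.index = b}, H ⧸ K.1) :
    {Λ : AddSubgroup (ℤ × H) // Λ.index = N} :=
  ⟨prodSublattice (N / x.1) x.2.1 x.2.2, by
    obtain ⟨⟨b, hb⟩, ⟨K, hK⟩, c⟩ := x
    rw [index_prodSublattice (Nat.div_ne_zero_of_mem_divisors hb), hK,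
      Nat.div_mul_cancel (Nat.dvd_of_mem_divisors hb)]⟩

lemma sublatticeOfSigma_injective (N : ℕ) : Function.Injective (sublatticeOfSigma H N) := by
  rintro ⟨⟨b, hb⟩, ⟨K, hK⟩, c⟩ ⟨⟨b', hb'⟩, ⟨K', hK'⟩, c'⟩ h
  have ha := Nat.div_ne_zero_of_mem_divisors hb
  have ha' := Nat.div_ne_zero_of_mem_divisors hb'
  have h : prodSublattice (N / b) K c = prodSublattice (N / b') K' c' := congrArg Subtype.val h
  obtain rfl : K = K' := by
    simpa only [comap_inr_prodSublattice ha, comap_inr_prodSublattice ha'] using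
      congrArg (comap (AddMonoidHom.inr ℤ H)) h
  obtain rfl : b = b' := hK.symm.trans hK'
  obtain rfl : c = c' := prodSublattice_injective ha h
  rfl

lemma sublatticeOfSigma_surjective {N : ℕ} (hN : N ≠ 0) :
    Function.Surjective (sublatticeOfSigma H N) := by
  rintro ⟨Λ, hΛ⟩
  set K := Λ.comap (AddMonoidHom.inr ℤ H)
  set a := (Λ.map (AddMonoidHom.fst ℤ H)).index
  have hNa : N = a * K.index := hΛ ▸ index_eq_index_map_fst_mul_index_comap_inr Λ
  have hfst : Λ.map (AddMonoidHom.fst ℤ H) = zmultiples (a : ℤ) :=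
    Int.addSubgroup_eq_zmultiples_index _
  obtain ⟨⟨a', h⟩, hh, rfl : a' = a⟩ := mem_map.1 (hfst ▸ mem_zmultiples (a : ℤ))
  have hK : K.index ∈ N.divisors := Nat.mem_divisors.2 ⟨Dvd.intro_left _ hNa.symm, hN⟩
  refine ⟨⟨⟨K.index, hK⟩, ⟨K, rfl⟩, h⟩, Subtype.ext ?_⟩
  have ha : N / K.index = a := by rw [hNa, Nat.mul_div_cancel _ (Nat.pos_of_mem_divisors hK)]
  simp only [sublatticeOfSigma, ha]
  exact (eq_prodSublattice hfst hh).symm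

lemma finite_index_eq_prod_int (hH : ∀ b ≠ 0, Finite {K : AddSubgroup H // K.index = b})
    {N : ℕ} (hN : N ≠ 0) : Finite {Λ : AddSubgroup (ℤ × H) // Λ.index = N} := by
  have (b : N.divisors) : Finite {K : AddSubgroup H // K.index = b} :=
    hH b (Nat.pos_of_mem_divisors b.2).ne'
  have (b : N.divisors) (K : {K : AddSubgroup H // K.index = b}) : K.1.FiniteIndex :=
    ⟨by rw [K.2]; exact (Nat.pos_of_mem_divisors b.2).ne'⟩
  exact Finite.of_surjective _ (sublatticeOfSigma_surjective hN)

lemma card_index_eq_prod_int (hH : ∀ b ≠ 0, Finite {K : AddSubgroup H // K.index = b})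
    {N : ℕ} (hN : N ≠ 0) :
    Nat.card {Λ : AddSubgroup (ℤ × H) // Λ.index = N} =
      ∑ b ∈ N.divisors, b * Nat.card {K : AddSubgroup H // K.index = b} := by
  have (b : N.divisors) : Fintype {K : AddSubgroup H // K.index = b} :=
    have := hH b (Nat.pos_of_mem_divisors b.2).ne'
    Fintype.ofFinite _
  have (b : N.divisors) (K : {K : AddSubgroup H // K.index = b}) : K.1.FiniteIndex :=
    ⟨by rw [K.2]; exact (Nat.pos_of_mem_divisors b.2).ne'⟩
  let e := Equiv.ofBijective (sublatticeOfSigma H N)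
    ⟨sublatticeOfSigma_injective N, sublatticeOfSigma_surjective hN⟩
  rw [← Nat.card_congr e, Nat.card_sigma, ← sum_coe_sort N.divisors]
  refine sum_congr rfl fun b _ => ?_
  simp_rw [Nat.card_sigma, ← index_eq_card, fun K : {K : AddSubgroup H // K.index = b} => K.2,
    sum_const, card_univ, smul_eq_mul, Nat.card_eq_fintype_card, mul_comm]

end AddSubgroup

def AddEquiv.indexEqEquiv {G G' : Type*} [AddGroup G] [AddGroup G'] (e : G ≃+ G') (N : ℕ) :
    {Λ : AddSubgroup G // Λ.index = N} ≃ {Λ : AddSubgroup G' // Λ.index = N} :=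
  e.mapAddSubgroup.toEquiv.subtypeEquiv fun Λ => by simp [AddSubgroup.index_map_equiv]

lemma finite_index_eq_pi (d : ℕ) {N : ℕ} (hN : N ≠ 0) :
    Finite {Λ : AddSubgroup (Fin d → ℤ) // Λ.index = N} := by
  induction d generalizing N with
  | zero => infer_instance
  | succ d ih =>
    have := AddSubgroup.finite_index_eq_prod_int (fun _ hb => ih hb) hN
    exact Finite.of_equiv _
      ((Fin.consLinearEquiv ℤ fun _ : Fin (d + 1) => ℤ).toAddEquiv.indexEqEquiv N)

lemma card_index_eq_pi_zero (N : ℕ) :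
    Nat.card {Λ : AddSubgroup (Fin 0 → ℤ) // Λ.index = N} = if N = 1 then 1 else 0 := by
  have (Λ : AddSubgroup (Fin 0 → ℤ)) : Λ.index = 1 := by
    rw [Subsingleton.elim Λ ⊤, AddSubgroup.index_top]
  split_ifs with hN
  · subst hN
    simp [this]
  · simp [this, Ne.symm hN]

lemma card_index_eq_pi_succ (d : ℕ) {N : ℕ} (hN : N ≠ 0) :
    Nat.card {Λ : AddSubgroup (Fin (d + 1) → ℤ) // Λ.index = N} =
      ∑ b ∈ N.divisors, b * Nat.card {Λ : AddSubgroup (Fin d → ℤ) // Λ.index = b} := by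
  rw [← Nat.card_congr
      ((Fin.consLinearEquiv ℤ fun _ : Fin (d + 1) => ℤ).toAddEquiv.indexEqEquiv N),
    AddSubgroup.card_index_eq_prod_int (fun _ => finite_index_eq_pi d) hN]

lemma card_index_eq_prime_pow_pi_succ {p : ℕ} (hp : p.Prime) (d n : ℕ) :
    Nat.card {Λ : AddSubgroup (Fin (d + 1) → ℤ) // Λ.index = p ^ n} =
      ∑ m ∈ range (n + 1), p ^ m * Nat.card {Λ : AddSubgroup (Fin d → ℤ) // Λ.index = p ^ m} := by
  rw [card_index_eq_pi_succ d (pow_ne_zero n hp.ne_zero), Nat.sum_divisors_prime_pow hp]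

lemma card_index_eq_prime_pow_pi {p : ℕ} (hp : p.Prime) (e n : ℕ) :
    (Nat.card {Λ : AddSubgroup (Fin (e + 1) → ℤ) // Λ.index = p ^ n} : ℝ) = gaussBinom p e n := by
  have hp1 : (1 : ℝ) < p := by exact_mod_cast hp.one_lt
  induction e generalizing n with
  | zero =>
    rw [card_index_eq_prime_pow_pi_succ hp, gaussBinom_zero_left hp1]
    simp_rw [card_index_eq_pi_zero, Nat.pow_eq_one, hp.ne_one, false_or]
    simp
  | succ e ih =>
    rw [card_index_eq_prime_pow_pi_succ hp, gaussBinom_succ_left hp1]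
    push_cast
    simp_rw [ih]

theorem card_sublattices_of_index_p_pow_general (p : ℕ) (hp : p.Prime) (d n : ℕ)
    (hd : 0 < d) :
    (Nat.card {Λ : AddSubgroup (Fin d → ℤ) // Λ.index = p ^ n} : ℝ) =
      (p : ℝ) ^ (n * (d - 1)) * poch (p : ℝ) (1 / (p : ℝ)) (d + n - 1) /
        (poch (p : ℝ) (1 / (p : ℝ)) (d - 1) * poch (p : ℝ) (1 / (p : ℝ)) n) := by
  obtain ⟨e, rfl⟩ : ∃ e, d = e + 1 := ⟨d - 1, by omega⟩
  rw [card_index_eq_prime_pow_pi hp, gaussBinom, Nat.add_sub_cancel, Nat.add_right_comm,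
    Nat.add_sub_cancel]

/-- counting sublattices of `ℤ^d` of index `p^n`.
The number of subgroups `Λ ≤ ℤ^d` of index `p^n` equals
`p^{n(d-1)} (1/p)_{d+n-1} / ((1/p)_{d-1} (1/p)_n)`. -/
theorem card_sublattices_of_index_p_pow (p : ℕ) (hp : p.Prime) (d n : ℕ)
    (hd : 0 < d) (hn : 0 < n) :
    (Nat.card {Λ : AddSubgroup (Fin d → ℤ) // Λ.index = p ^ n} : ℝ) =
      (p : ℝ) ^ (n * (d - 1)) * poch (p : ℝ) (1 / (p : ℝ)) (d + n - 1) /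
        (poch (p : ℝ) (1 / (p : ℝ)) (d - 1) * poch (p : ℝ) (1 / (p : ℝ)) n) :=
  card_sublattices_of_index_p_pow_general p hp d n hd
end
end
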